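/- arXiv:2409.06319 — 2 statements merged into one kernel-verified Lean document; each statement's English description precedes it below -/
import Mathlib

section
/- Let ρ > 0, C ≥ 0 and γ ≥ 2 be real numbers, and for t ∈ ℕ set η_t = 2/(ρ(t+γ)). Let (D_t)_{t≥0} be a sequence of nonnegative real numbers satisfying D_{t+1} ≤ (1 − η_t ρ) D_t + η_t² C for every t ≥ 0. Then for every t ≥ 0, D_t ≤ max{ 4C/ρ², (γ+1) D_0 } / (t + γ). -/
/-!
With `s = t + γ` the recursion reads `D_{t+1} ≤ (1 - 2/s) D_t + B/s²` where `B = 4C/ρ²`.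
If `D_t ≤ M/s` with `B ≤ M`, then `D_{t+1} ≤ (s - 1) M / s² ≤ M/(s + 1)` because
`(s - 1)(s + 1) ≤ s²`. The base case only needs `γ D_0 ≤ M`.
-/

lemma le_div_add_one_of_sgd_step {s M B d d' : ℝ} (hs : 2 ≤ s) (hM : 0 ≤ M) (hB : B ≤ M)
    (hd : d ≤ M / s) (hd' : d' ≤ (1 - 2 / s) * d + B / s ^ 2) : d' ≤ M / (s + 1) := by
  have hs0 : 0 < s := by linarith
  have hcoef : 0 ≤ 1 - 2 / s := by
    rw [sub_nonneg, div_le_one hs0]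
    exact hs
  calc d' ≤ (1 - 2 / s) * d + B / s ^ 2 := hd'
    _ ≤ (1 - 2 / s) * (M / s) + M / s ^ 2 := by
        gcongr
    _ = (s - 1) * M / s ^ 2 := by
        field_simp
        ring
    _ ≤ M / (s + 1) := by
        rw [div_le_div_iff₀ (by positivity) (by positivity)]
        nlinarith

lemma le_div_add_of_sgd_recursion {u : ℕ → ℝ} {γ B M : ℝ} (hγ : 2 ≤ γ)
    (hM : 0 ≤ M) (hB : B ≤ M) (h₀ : γ * u 0 ≤ M)
    (hu : ∀ t : ℕ, u (t + 1) ≤ (1 - 2 / (t + γ)) * u t + B / (t + γ) ^ 2) :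
    ∀ t : ℕ, u t ≤ M / (t + γ) := by
  intro t
  induction t with
  | zero =>
    rw [Nat.cast_zero, zero_add, le_div_iff₀ (by linarith)]
    linarith
  | succ t ih =>
    have hs : 2 ≤ (t : ℝ) + γ := by linarith [t.cast_nonneg (α := ℝ)]
    have := le_div_add_one_of_sgd_step hs hM hB ih (hu t)
    rwa [Nat.cast_succ, add_right_comm]

theorem stmt_1_general (ρ C γ : ℝ) (hρ : 0 < ρ) (hγ : 2 ≤ γ)
    (η : ℕ → ℝ) (hη : ∀ t : ℕ, η t = 2 / (ρ * (t + γ)))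
    (D : ℕ → ℝ) (hDnn : ∀ t, 0 ≤ D t)
    (hrec : ∀ t : ℕ, D (t + 1) ≤ (1 - η t * ρ) * D t + η t ^ 2 * C) :
    ∀ t : ℕ, D t ≤ max (4 * C / ρ ^ 2) ((γ + 1) * D 0) / (t + γ) := by
  have hD₀ : γ * D 0 ≤ (γ + 1) * D 0 := by linarith [hDnn 0]
  have hM : 0 ≤ (γ + 1) * D 0 := mul_nonneg (by linarith) (hDnn 0)
  have hrec' (t : ℕ) :
      D (t + 1) ≤ (1 - 2 / (t + γ)) * D t + 4 * C / ρ ^ 2 / (t + γ) ^ 2 := by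
    have hs : (t : ℝ) + γ ≠ 0 := by linarith [t.cast_nonneg (α := ℝ)]
    have hηρ : η t * ρ = 2 / (t + γ) := by
      rw [hη t]
      field_simp
    have hη_sq : η t ^ 2 * C = 4 * C / ρ ^ 2 / (t + γ) ^ 2 := by
      rw [hη t]
      field_simp
      ring
    rw [← hηρ, ← hη_sq]
    exact hrec t
  exact le_div_add_of_sgd_recursion hγ
    (hM.trans (le_max_right _ _)) (le_max_left _ _)
    (hD₀.trans (le_max_right _ _)) hrec'

/-- Induction step of Theorem 1: a nonnegative sequence satisfying the SGD
recursion with step sizes η_t = 2/(ρ(t+γ)) decays at rate O(1/t). -/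
theorem stmt_1 (ρ C γ : ℝ) (hρ : 0 < ρ) (hC : 0 ≤ C) (hγ : 2 ≤ γ)
    (η : ℕ → ℝ) (hη : ∀ t : ℕ, η t = 2 / (ρ * (t + γ)))
    (D : ℕ → ℝ) (hDnn : ∀ t, 0 ≤ D t)
    (hrec : ∀ t : ℕ, D (t + 1) ≤ (1 - η t * ρ) * D t + η t ^ 2 * C) :
    ∀ t : ℕ, D t ≤ max (4 * C / ρ ^ 2) ((γ + 1) * D 0) / (t + γ) :=
  stmt_1_general ρ C γ hρ hγ η hη D hDnn hrec
end

section
/- Let E be a real inner product space, K ≥ 1 and e ≥ 1 integers, and t₀ ≤ t natural numbers with t − t₀ ≤ e − 1. Let (η_τ)_{τ≥0} be nonnegative step sizes, let η > 0 be such that η_τ ≤ η_{t₀} for all τ with t₀ ≤ τ ≤ t − 1 and η_{t₀} ≤ 2η. For each k ∈ {1,…,K} let ζ_k ≥ 0 and let g_{k,τ} ∈ E satisfy ‖g_{k,τ}‖ ≤ ζ_k for all t₀ ≤ τ ≤ t − 1. Fix y ∈ E, set x_k = y − Σ_{τ=t₀}^{t−1} η_τ g_{k,τ} and x̄ = (1/K)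 Σ_{k=1}^{K} x_k. Then (1/K) Σ_{k=1}^{K} ‖x̄ − x_k‖² ≤ 4η²(e−1)² (1/K) Σ_{k=1}^{K} ζ_k². -/
/-!
Every local model starts at `y`, so `y - x k` is a sum of at most `e - 1` steps `η τ • g k τ`,
each of norm at most `2 η̄ ζ_k`. The mean `x̄` minimises `z ↦ ∑ k, ‖z - x k‖²`, so the spread
around `x̄` is at most the spread around the common starting point `y`.
-/

open Finset

section Average

variable {ι E : Type*}

theorem Finset.sum_sub_average_eq_zero {𝕜 : Type*} [DivisionRing 𝕜] [CharZero 𝕜]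
    [AddCommGroup E] [Module 𝕜 E] (s : Finset ι) (x : ι → E) :
    ∑ i ∈ s, (x i - (#s : 𝕜)⁻¹ • ∑ j ∈ s, x j) = 0 := by
  rcases s.eq_empty_or_nonempty with rfl | hs
  · simp
  have hcard : (#s : 𝕜) ≠ 0 := Nat.cast_ne_zero.2 hs.card_pos.ne'
  rw [sum_sub_distrib, sum_const, ← Nat.cast_smul_eq_nsmul 𝕜, smul_smul,
    mul_inv_cancel₀ hcard, one_smul, sub_self]

variable [NormedAddCommGroup E] [InnerProductSpace ℝ E]

theorem Finset.sum_norm_sub_sq_eq_sum_norm_average_sub_sq_add (s : Finset ι) (x : ι → E)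
    (y : E) :
    ∑ i ∈ s, ‖y - x i‖ ^ 2 =
      ∑ i ∈ s, ‖(#s : ℝ)⁻¹ • ∑ j ∈ s, x j - x i‖ ^ 2 +
        #s * ‖y - (#s : ℝ)⁻¹ • ∑ j ∈ s, x j‖ ^ 2 := by
  set m := (#s : ℝ)⁻¹ • ∑ j ∈ s, x j
  have hcross : ∑ i ∈ s, inner ℝ (y - m) (m - x i) = 0 := by
    rw [← inner_sum, ← neg_eq_zero, ← inner_neg_right, ← sum_neg_distrib]
    simp only [neg_sub]
    rw [sum_sub_average_eq_zero, inner_zero_right]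
  have hsplit : ∀ i ∈ s, ‖y - x i‖ ^ 2 =
      ‖m - x i‖ ^ 2 + 2 * inner ℝ (y - m) (m - x i) + ‖y - m‖ ^ 2 := fun i _ => by
    rw [← sub_add_sub_cancel y m (x i), norm_add_sq_real]
    ring
  rw [sum_congr rfl hsplit, sum_add_distrib, sum_add_distrib, ← mul_sum, hcross,
    sum_const, nsmul_eq_mul]
  ring

theorem Finset.sum_norm_average_sub_sq_le (s : Finset ι) (x : ι → E) (y : E) :
    ∑ i ∈ s, ‖(#s : ℝ)⁻¹ • ∑ j ∈ s, x j - x i‖ ^ 2 ≤ ∑ i ∈ s, ‖y - x i‖ ^ 2 := by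
  rw [sum_norm_sub_sq_eq_sum_norm_average_sub_sq_add s x y]
  exact le_add_of_nonneg_right (by positivity)

end Average

theorem Finset.norm_sum_smul_le_card_mul {ι E : Type*} [SeminormedAddCommGroup E]
    [NormedSpace ℝ E] (s : Finset ι) (c : ι → ℝ) (g : ι → E) {B ζ : ℝ}
    (hc : ∀ i ∈ s, ‖c i‖ ≤ B) (hg : ∀ i ∈ s, ‖g i‖ ≤ ζ) :
    ‖∑ i ∈ s, c i • g i‖ ≤ #s * (B * ζ) := by
  have hterm : ∀ i ∈ s, ‖c i • g i‖ ≤ B * ζ := fun i hi => by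
    rw [norm_smul]
    exact mul_le_mul (hc i hi) (hg i hi) (norm_nonneg _) ((norm_nonneg _).trans (hc i hi))
  calc ‖∑ i ∈ s, c i • g i‖ ≤ ∑ _i ∈ s, B * ζ := norm_sum_le_of_le s hterm
    _ = #s * (B * ζ) := by rw [sum_const, nsmul_eq_mul]

theorem stmt_3_general {E : Type*} [NormedAddCommGroup E] [InnerProductSpace ℝ E]
    (K e : ℕ) (he : 1 ≤ e)
    (t₀ t : ℕ) (hte : t - t₀ ≤ e - 1)
    (η : ℕ → ℝ) (hηnn : ∀ τ, 0 ≤ η τ)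
    (ηbar : ℝ)
    (hmono : ∀ τ ∈ Finset.Ico t₀ t, η τ ≤ η t₀) (hη0 : η t₀ ≤ 2 * ηbar)
    (ζ : Fin K → ℝ)
    (g : Fin K → ℕ → E) (hg : ∀ k, ∀ τ ∈ Finset.Ico t₀ t, ‖g k τ‖ ≤ ζ k)
    (y : E) (x : Fin K → E) (hx : ∀ k, x k = y - ∑ τ ∈ Finset.Ico t₀ t, η τ • g k τ)
    (xbar : E) (hxbar : xbar = (K : ℝ)⁻¹ • ∑ k, x k) :
    (K : ℝ)⁻¹ * ∑ k, ‖xbar - x k‖ ^ 2 ≤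
      4 * ηbar ^ 2 * ((e : ℝ) - 1) ^ 2 * ((K : ℝ)⁻¹ * ∑ k, ζ k ^ 2) := by
  have hsteps : ((#(Ico t₀ t) : ℕ) : ℝ) ≤ (e : ℝ) - 1 := by
    rw [Nat.card_Ico, ← Nat.cast_one, ← Nat.cast_sub he]
    exact_mod_cast hte
  have hdrift : ∀ k, ‖y - x k‖ ^ 2 ≤ 4 * ηbar ^ 2 * ((e : ℝ) - 1) ^ 2 * ζ k ^ 2 := fun k => by
    have hstep : ∀ τ ∈ Ico t₀ t, ‖η τ‖ ≤ 2 * ηbar := fun τ hτ => by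
      rw [Real.norm_of_nonneg (hηnn τ)]
      exact (hmono τ hτ).trans hη0
    have hnorm := norm_sum_smul_le_card_mul _ _ _ hstep (hg k)
    rw [hx, sub_sub_cancel]
    calc ‖∑ τ ∈ Ico t₀ t, η τ • g k τ‖ ^ 2
        ≤ ((#(Ico t₀ t) : ℕ) : ℝ) ^ 2 * (2 * ηbar * ζ k) ^ 2 := by
          rw [← mul_pow]; exact pow_le_pow_left₀ (norm_nonneg _) hnorm 2
      _ ≤ ((e : ℝ) - 1) ^ 2 * (2 * ηbar * ζ k) ^ 2 := by gcongr
      _ = 4 * ηbar ^ 2 * ((e : ℝ) - 1) ^ 2 * ζ k ^ 2 := by ring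
  have hspread : ∑ k, ‖xbar - x k‖ ^ 2 ≤ ∑ k, ‖y - x k‖ ^ 2 := by
    simpa [hxbar] using sum_norm_average_sub_sq_le univ x y
  calc (K : ℝ)⁻¹ * ∑ k, ‖xbar - x k‖ ^ 2
      ≤ (K : ℝ)⁻¹ * ∑ k, 4 * ηbar ^ 2 * ((e : ℝ) - 1) ^ 2 * ζ k ^ 2 := by
        gcongr ?_ * ?_
        exact hspread.trans (sum_le_sum fun k _ => hdrift k)
    _ = 4 * ηbar ^ 2 * ((e : ℝ) - 1) ^ 2 * ((K : ℝ)⁻¹ * ∑ k, ζ k ^ 2) := by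
        rw [← mul_sum]; ring

/-- Lemma 1 (deterministic form): client-drift bound over a block of at most
e local SGD steps. -/
theorem stmt_3 {E : Type*} [NormedAddCommGroup E] [InnerProductSpace ℝ E]
    (K e : ℕ) (hK : 1 ≤ K) (he : 1 ≤ e)
    (t₀ t : ℕ) (ht₀ : t₀ ≤ t) (hte : t - t₀ ≤ e - 1)
    (η : ℕ → ℝ) (hηnn : ∀ τ, 0 ≤ η τ)
    (ηbar : ℝ) (hηbar : 0 < ηbar)
    (hmono : ∀ τ ∈ Finset.Ico t₀ t, η τ ≤ η t₀) (hη0 : η t₀ ≤ 2 * ηbar)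
    (ζ : Fin K → ℝ) (hζ : ∀ k, 0 ≤ ζ k)
    (g : Fin K → ℕ → E) (hg : ∀ k, ∀ τ ∈ Finset.Ico t₀ t, ‖g k τ‖ ≤ ζ k)
    (y : E) (x : Fin K → E) (hx : ∀ k, x k = y - ∑ τ ∈ Finset.Ico t₀ t, η τ • g k τ)
    (xbar : E) (hxbar : xbar = (K : ℝ)⁻¹ • ∑ k, x k) :
    (K : ℝ)⁻¹ * ∑ k, ‖xbar - x k‖ ^ 2 ≤
      4 * ηbar ^ 2 * ((e : ℝ) - 1) ^ 2 * ((K : ℝ)⁻¹ * ∑ k, ζ k ^ 2) :=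
  stmt_3_general K e he t₀ t hte η hηnn ηbar hmono hη0 ζ g hg y x hx xbar hxbar
end
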